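/- A mobile cluster can move one step: if η has particles at sites x and y with 1 ≤ y − x ≤ 2, then η is connected by a finite sequence of allowed jumps to a configuration η' that agrees with η outside {x,...,y+1} and has particles at two sites x', y' ⊆ {x+1,...,y+1} with 1 ≤ y' − x' ≤ 2 (the cluster shifted right by one), where the jumps only modify sites in {x,...,y+1}. -/

import Mathlib

/-
Only the two sites ahead of the left particle matter. If the pair is `x, x + 2` with `x + 1`
empty, the particle at `x` jumps to `x + 1`, the jump being enabled by the particle at `x + 2`.
If the pair is `x, x + 1` with `x + 2` empty, the particle at `x + 1` first jumps to `x + 2`,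
enabled by the particle at `x`; this leaves the pair `x, x + 2` of the first case. In every case
the cluster ends up on `x + 1, x + 2`, and all jumps stay inside `{x, x + 1, x + 2}`.
-/

def swapConf (η : ℤ → Bool) (x : ℤ) : ℤ → Bool :=
  fun y => if y = x then η (x + 1) else if y = x + 1 then η x else η y

/-- An allowed jump of the full configuration whose two modified sites lie in `Λ`. -/
def StepIn (Λ : Set ℤ) (η η' : ℤ → Bool) : Prop :=
  ∃ z : ℤ, z ∈ Λ ∧ z + 1 ∈ Λ ∧ (η (z - 1) = true ∨ η (z + 2) = true) ∧
    η z ≠ η (z + 1) ∧ η' = swapConf η z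

@[simp]
lemma swapConf_self (η : ℤ → Bool) (x : ℤ) : swapConf η x x = η (x + 1) := by
  simp [swapConf]

@[simp]
lemma swapConf_add_one (η : ℤ → Bool) (x : ℤ) : swapConf η x (x + 1) = η x := by
  simp [swapConf]

lemma swapConf_of_ne (η : ℤ → Bool) {x z : ℤ} (h₀ : z ≠ x) (h₁ : z ≠ x + 1) :
    swapConf η x z = η z := by
  simp [swapConf, h₀, h₁]

namespace StepIn

variable {Λ Λ' : Set ℤ} {η η' : ℤ → Bool}

lemma mono (hΛ : Λ ⊆ Λ') (h : StepIn Λ η η') : StepIn Λ' η η' := by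
  obtain ⟨z, hz, hz₁, henabled, hdiff, rfl⟩ := h
  exact ⟨z, hΛ hz, hΛ hz₁, henabled, hdiff, rfl⟩

lemma apply_eq_of_notMem (h : StepIn Λ η η') {z : ℤ} (hz : z ∉ Λ) : η' z = η z := by
  obtain ⟨w, hw, hw₁, -, -, rfl⟩ := h
  exact swapConf_of_ne η (by rintro rfl; exact hz hw) (by rintro rfl; exact hz hw₁)

lemma reflTransGen_apply_eq_of_notMem (h : Relation.ReflTransGen (StepIn Λ) η η') {z : ℤ}
    (hz : z ∉ Λ) : η' z = η z := by
  induction h with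
  | refl => rfl
  | tail _ hstep ih => rw [hstep.apply_eq_of_notMem hz, ih]

end StepIn

lemma exists_reachable_of_gap {η : ℤ → Bool} {x : ℤ} (hx : η x = true)
    (hx₂ : η (x + 2) = true) :
    ∃ η', Relation.ReflTransGen (StepIn (Set.Icc x (x + 2))) η η' ∧
      η' (x + 1) = true ∧ η' (x + 2) = true := by
  cases hx₁ : η (x + 1)
  · have hstep : StepIn (Set.Icc x (x + 2)) η (swapConf η x) :=
      ⟨x, by simp, by constructor <;> omega, Or.inr hx₂, by simp [hx, hx₁], rfl⟩
    refine ⟨swapConf η x, .single hstep, by simpa using hx, ?_⟩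
    rwa [swapConf_of_ne η (by omega) (by omega)]
  · exact ⟨η, .refl, hx₁, hx₂⟩

lemma exists_reachable_of_adjacent {η : ℤ → Bool} {x : ℤ} (hx : η x = true)
    (hx₁ : η (x + 1) = true) :
    ∃ η', Relation.ReflTransGen (StepIn (Set.Icc x (x + 2))) η η' ∧
      η' (x + 1) = true ∧ η' (x + 2) = true := by
  cases hx₂ : η (x + 2)
  · have hx₂' : η (x + 1 + 1) = false := by rwa [add_assoc]
    have hstep : StepIn (Set.Icc x (x + 2)) η (swapConf η (x + 1)) :=
      ⟨x + 1, by constructor <;> omega, by constructor <;> omega,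
        Or.inl (by simpa using hx), by simp [hx₁, hx₂'], rfl⟩
    obtain ⟨η', hreach, h₁, h₂⟩ := exists_reachable_of_gap (η := swapConf η (x + 1)) (x := x)
      (by rwa [swapConf_of_ne η (by omega) (by omega)])
      (by rw [show x + 2 = x + 1 + 1 by ring, swapConf_add_one]; exact hx₁)
    exact ⟨η', .head hstep hreach, h₁, h₂⟩
  · exact ⟨η, .refl, hx₁, hx₂⟩

theorem mobile_cluster_moves_one_step (η : ℤ → Bool) (x y : ℤ)
    (hx : η x = true) (hy : η y = true) (h1 : 1 ≤ y - x) (h2 : y - x ≤ 2) :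
    ∃ η' : ℤ → Bool,
      Relation.ReflTransGen (StepIn (Set.Icc x (y + 1))) η η' ∧
      (∀ z : ℤ, z ∉ Set.Icc x (y + 1) → η' z = η z) ∧
      ∃ x' y' : ℤ, x' ∈ Set.Icc (x + 1) (y + 1) ∧ y' ∈ Set.Icc (x + 1) (y + 1) ∧
        η' x' = true ∧ η' y' = true ∧ 1 ≤ y' - x' ∧ y' - x' ≤ 2 := by
  obtain ⟨η', hreach, h₁, h₂⟩ :
      ∃ η', Relation.ReflTransGen (StepIn (Set.Icc x (x + 2))) η η' ∧
        η' (x + 1) = true ∧ η' (x + 2) = true := by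
    rcases (by omega : y = x + 1 ∨ y = x + 2) with rfl | rfl
    · exact exists_reachable_of_adjacent hx hy
    · exact exists_reachable_of_gap hx hy
  have hreach' : Relation.ReflTransGen (StepIn (Set.Icc x (y + 1))) η η' :=
    Relation.ReflTransGen.mono
      (fun _ _ ↦ StepIn.mono (Set.Icc_subset_Icc le_rfl (by omega))) _ _ hreach
  exact ⟨η', hreach', fun _ hz ↦ StepIn.reflTransGen_apply_eq_of_notMem hreach' hz,
    x + 1, x + 2, by constructor <;> omega, by constructor <;> omega, h₁, h₂, by omega, by omega⟩
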